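/- arXiv:2511.08152 — 3 statements merged into one kernel-verified Lean document; each statement's English description precedes it below -/
import Mathlib

section
/- For a diagonal positive-definite matrix Q̃, at any KKT point (γ, μ, λ) of the problem minimize γᵀQ̃γ subject to γ ≥ 0 and 1ᵀγ = 1 (with Lagrangian Γ(γ,μ,λ) = γᵀQ̃γ − μᵀγ + λ(1ᵀγ − 1)), the multiplier μ associated with the nonnegativity constraint must be the zero vector. -/
open Finset

/-- At any KKT point of minimizing `γᵀQ̃γ` over the probability simplex, where `Q̃` is
diagonal with strictly positive diagonal entries `q`, the multiplier `μ` associated with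
the nonnegativity constraint `γ ≥ 0` must vanish.  The KKT conditions (as in the paper's
Lagrangian `Γ(γ,μ,λ) = γᵀQ̃γ − μᵀγ + λ(1ᵀγ − 1)`) are: stationarity `q m * γ m − μ m + λ = 0`,
primal feasibility `γ ≥ 0`, `∑ γ = 1`, dual feasibility `μ ≥ 0`, and complementary
slackness `μᵀγ = 0`. -/
theorem stmt_1 (n : ℕ) (q : Fin n → ℝ) (hq : ∀ m, 0 < q m)
    (γ μ : Fin n → ℝ) (lam : ℝ)
    (hstat : ∀ m, q m * γ m - μ m + lam = 0)
    (hγ : ∀ m, 0 ≤ γ m) (hsum : ∑ m, γ m = 1)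
    (hμ : ∀ m, 0 ≤ μ m) (hcs : ∑ m, μ m * γ m = 0) :
    μ = 0 := by
  -- each term of complementary slackness vanishes
  have hterm : ∀ m, μ m * γ m = 0 := by
    intro m
    have := Finset.sum_eq_zero_iff_of_nonneg
      (fun i _ => mul_nonneg (hμ i) (hγ i)) |>.mp hcs
    exact this m (Finset.mem_univ m)
  -- there is some k with γ k > 0
  obtain ⟨k, -, hk⟩ : ∃ k ∈ Finset.univ, 0 < γ k := by
    by_contra h
    push_neg at h
    have : ∑ m, γ m = 0 := Finset.sum_eq_zero (fun m _ => le_antisymm (h m (Finset.mem_univ m)) (hγ m))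
    simp [this] at hsum
  have hμk : μ k = 0 := by
    rcases mul_eq_zero.mp (hterm k) with h | h
    · exact h
    · exact absurd h (ne_of_gt hk)
  have hlam : lam < 0 := by
    have := hstat k
    have : lam = -(q k * γ k) := by linarith [hstat k, hμk]
    rw [this]
    exact neg_neg_iff_pos.mpr (mul_pos (hq k) hk)
  funext m
  by_cases hm : γ m = 0
  · have := hstat m
    have : μ m = lam := by rw [hm] at this; linarith
    exact absurd (this ▸ hμ m) (not_le.mpr hlam)
  · have hmp : 0 < γ m := lt_of_le_of_ne (hγ m) (Ne.symm hm)
    rcases mul_eq_zero.mp (hterm m) with h | h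
    · exact h
    · exact absurd h hm
end

section
/- If the minimum over the probability simplex of ‖Σ_m γ_m g_m‖² is attained at γ* with d := Σ_m γ*_m g_m ≠ 0, then −d is a common descent direction: ⟨g_m, d⟩ ≥ ‖d‖² > 0 for every m. -/
open Finset

/-! The set `K` of convex combinations `∑ γ_m g_m` is convex and `d` is its point of least norm,
so `d` is the projection of `0` onto `K`. The variational characterisation of projections onto
convex sets gives `⟪d, w - d⟫ ≥ 0` for every `w ∈ K`; taking `w = g_m` yields `‖d‖² ≤ ⟪g_m, d⟫`. -/

theorem real_inner_sub_nonneg_of_isMinOn_norm {F : Type*} [NormedAddCommGroup F]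
    [InnerProductSpace ℝ F] {K : Set F} (hK : Convex ℝ K) {v : F} (hv : v ∈ K)
    (hmin : IsMinOn norm K v) {w : F} (hw : w ∈ K) : 0 ≤ inner ℝ v (w - v) := by
  have : Nonempty K := ⟨⟨v, hv⟩⟩
  have hproj : ‖0 - v‖ = ⨅ u : K, ‖0 - (u : F)‖ :=
    le_antisymm (le_ciInf fun u => by simpa using hmin u.2)
      (ciInf_le ⟨0, Set.forall_mem_range.2 fun _ => norm_nonneg _⟩ (⟨v, hv⟩ : K))
  have := (norm_eq_iInf_iff_real_inner_le_zero hK hv).1 hproj w hw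
  rwa [zero_sub, inner_neg_left, neg_nonpos] at this

theorem convex_image_stdSimplex_linearCombination {ι M : Type*} [Fintype ι] [AddCommGroup M]
    [Module ℝ M] (g : ι → M) :
    Convex ℝ ((fun γ : ι → ℝ => ∑ m, γ m • g m) '' stdSimplex ℝ ι) := by
  rw [show (fun γ : ι → ℝ => ∑ m, γ m • g m) = Fintype.linearCombination ℝ g from
    funext fun γ => (Fintype.linearCombination_apply ℝ g γ).symm]
  exact (convex_stdSimplex ℝ ι).linear_image _

theorem mem_image_stdSimplex_linearCombination {ι M : Type*} [Fintype ι] [DecidableEq ι]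
    [AddCommGroup M] [Module ℝ M] (g : ι → M) (i : ι) :
    g i ∈ (fun γ : ι → ℝ => ∑ m, γ m • g m) '' stdSimplex ℝ ι :=
  ⟨Pi.single i 1, single_mem_stdSimplex ℝ i, by simp [Pi.single_apply]⟩

/-- If `γ*` minimizes `‖∑ m, γ_m g_m‖²` over the probability simplex and
`d := ∑ m, γ*_m g_m ≠ 0`, then `−d` is a common descent direction:
`⟪g_m, d⟫ ≥ ‖d‖² > 0` for every `m`. -/
theorem stmt_4 (n p : ℕ) (g : Fin n → EuclideanSpace ℝ (Fin p))
    (γstar : Fin n → ℝ) (hγ : ∀ m, 0 ≤ γstar m) (hsum : ∑ m, γstar m = 1)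
    (hmin : ∀ γ : Fin n → ℝ, (∀ m, 0 ≤ γ m) → (∑ m, γ m = 1) →
      ‖∑ m, γstar m • g m‖ ^ 2 ≤ ‖∑ m, γ m • g m‖ ^ 2)
    (d : EuclideanSpace ℝ (Fin p)) (hd : d = ∑ m, γstar m • g m) (hdne : d ≠ 0) :
    (∀ m, ‖d‖ ^ 2 ≤ inner ℝ (g m) d) ∧ (0 : ℝ) < ‖d‖ ^ 2 := by
  set K := (fun γ : Fin n → ℝ => ∑ m, γ m • g m) '' stdSimplex ℝ (Fin n)
  have hdK : d ∈ K := ⟨γstar, ⟨hγ, hsum⟩, hd.symm⟩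
  have hdmin : IsMinOn norm K d := by
    rintro _ ⟨γ, ⟨hγ₀, hγ₁⟩, rfl⟩
    rw [hd]
    exact (pow_le_pow_iff_left₀ (norm_nonneg _) (norm_nonneg _) two_ne_zero).1 (hmin γ hγ₀ hγ₁)
  refine ⟨fun m => ?_, by positivity⟩
  have := real_inner_sub_nonneg_of_isMinOn_norm (convex_image_stdSimplex_linearCombination g)
    hdK hdmin (mem_image_stdSimplex_linearCombination g m)
  rw [inner_sub_right, real_inner_self_eq_norm_sq, real_inner_comm] at this
  linarith
end

section
/- Pareto optimality implies Pareto stationarity: if θ* is Pareto optimal for differentiable objectives f_1,...,f_n (no θ dominates θ*), then there exist nonnegative weights γ summing to 1 with Σ_m γ_m ∇f_m(θ*) = 0. -/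
/-!
If `0` is not a convex combination of the gradients `∇f_m(θ*)`, then `0` lies outside their
(compact, convex) convex hull, and Hahn–Banach separation gives a direction `d` with
`⟪∇f_m(θ*), d⟫ < 0` for every `m` (Gordan's alternative). Every objective then strictly decreases
along `θ* + t • d` for all small `t > 0`, so such a point dominates `θ*`.
-/

open Set Filter Topology

open scoped RealInnerProductSpace

theorem mem_convexHull_range_iff_exists_stdSimplex {ι E : Type*} [Fintype ι] [AddCommGroup E]
    [Module ℝ E] {v : ι → E} {x : E} :
    x ∈ convexHull ℝ (range v) ↔ ∃ w ∈ stdSimplex ℝ ι, ∑ i, w i • v i = x := by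
  classical
  have hv : Fintype.linearCombination ℝ v '' range (fun i j ↦ if i = j then (1 : ℝ) else 0) =
      range v := by
    rw [← range_comp]; congr! 1; ext i; simp [Fintype.linearCombination_apply, ite_smul]
  rw [← hv, ← LinearMap.image_convexHull, convexHull_basis_eq_stdSimplex]
  simp [Fintype.linearCombination_apply]

theorem exists_forall_neg_of_zero_notMem_convexHull {ι E : Type*} [Finite ι] [AddCommGroup E]
    [TopologicalSpace E] [IsTopologicalAddGroup E] [Module ℝ E] [ContinuousSMul ℝ E]
    [LocallyConvexSpace ℝ E] [T2Space E] {v : ι → E} (h : 0 ∉ convexHull ℝ (range v)) :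
    ∃ φ : StrongDual ℝ E, ∀ i, φ (v i) < 0 := by
  obtain ⟨φ, u, hφ, hu⟩ := geometric_hahn_banach_closed_point (convex_convexHull ℝ _)
    ((finite_range v).isClosed_convexHull (𝕜 := ℝ)) h
  exact ⟨φ, fun i ↦ (hφ _ (subset_convexHull ℝ _ (mem_range_self i))).trans (by simpa using hu)⟩

theorem exists_forall_inner_neg_of_zero_notMem_convexHull {ι E : Type*} [Finite ι]
    [NormedAddCommGroup E] [InnerProductSpace ℝ E] [CompleteSpace E] {v : ι → E}
    (h : 0 ∉ convexHull ℝ (range v)) : ∃ d : E, ∀ i, ⟪v i, d⟫ < 0 := by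
  obtain ⟨φ, hφ⟩ := exists_forall_neg_of_zero_notMem_convexHull h
  refine ⟨(InnerProductSpace.toDual ℝ E).symm φ, fun i ↦ ?_⟩
  rw [real_inner_comm, InnerProductSpace.toDual_symm_apply]
  exact hφ i

theorem HasDerivAt.eventually_lt_of_neg {g : ℝ → ℝ} {g' a : ℝ} (hg : HasDerivAt g g' a)
    (hg' : g' < 0) : ∀ᶠ t in 𝓝[>] 0, g (a + t) < g a := by
  filter_upwards [hg.tendsto_slope_zero_right.eventually (eventually_lt_nhds hg'),
    self_mem_nhdsWithin] with t hslope (ht : 0 < t)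
  rw [smul_eq_mul, mul_neg_iff] at hslope
  rcases hslope with ⟨-, h⟩ | ⟨h, -⟩
  · linarith
  · exact absurd h (not_lt.2 (inv_pos.2 ht).le)

theorem HasFDerivAt.eventually_lt_of_apply_neg {E : Type*} [NormedAddCommGroup E]
    [NormedSpace ℝ E] {f : E → ℝ} {f' : StrongDual ℝ E} {x d : E} (hf : HasFDerivAt f f' x)
    (hd : f' d < 0) : ∀ᶠ t in 𝓝[>] (0 : ℝ), f (x + t • d) < f x := by
  have hline : HasDerivAt (fun t : ℝ ↦ x + t • d) d 0 := by
    simpa using ((hasDerivAt_id (0 : ℝ)).smul_const d).const_add x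
  have hf₀ : HasFDerivAt f f' (x + (0 : ℝ) • d) := by simpa using hf
  simpa using (hf₀.comp_hasDerivAt 0 hline).eventually_lt_of_neg hd

theorem HasGradientAt.eventually_lt_of_inner_neg {E : Type*} [NormedAddCommGroup E]
    [InnerProductSpace ℝ E] [CompleteSpace E] {f : E → ℝ} {g x d : E} (hf : HasGradientAt f g x)
    (hd : ⟪g, d⟫ < 0) : ∀ᶠ t in 𝓝[>] (0 : ℝ), f (x + t • d) < f x :=
  hf.hasFDerivAt.eventually_lt_of_apply_neg (by rwa [InnerProductSpace.toDual_apply_apply])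

/-- Pareto optimality implies Pareto stationarity: if no `θ` dominates `θ*` for the
continuously differentiable objectives `f_1, …, f_n`, then there exist nonnegative
weights `γ` summing to `1` with `∑ m, γ_m ∇f_m(θ*) = 0`. -/
theorem stmt_10 (n p : ℕ) (hn : 0 < n) (f : Fin n → EuclideanSpace ℝ (Fin p) → ℝ)
    (hf : ∀ m, ContDiff ℝ 1 (f m)) (θstar : EuclideanSpace ℝ (Fin p))
    (hpareto : ¬ ∃ θ : EuclideanSpace ℝ (Fin p),
      (∀ m, f m θ ≤ f m θstar) ∧ (fun m => f m θ) ≠ (fun m => f m θstar)) :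
    ∃ γ : Fin n → ℝ, (∀ m, 0 ≤ γ m) ∧ (∑ m, γ m = 1) ∧
      ∑ m, γ m • gradient (f m) θstar = 0 := by
  by_contra hstationary
  have h0 : 0 ∉ convexHull ℝ (range fun m ↦ gradient (f m) θstar) := by
    rw [mem_convexHull_range_iff_exists_stdSimplex]
    rintro ⟨γ, ⟨hγ₀, hγ₁⟩, hγ⟩
    exact hstationary ⟨γ, hγ₀, hγ₁, hγ⟩
  obtain ⟨d, hd⟩ := exists_forall_inner_neg_of_zero_notMem_convexHull h0
  have hdescent : ∀ m, ∀ᶠ t in 𝓝[>] (0 : ℝ), f m (θstar + t • d) < f m θstar := fun m ↦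
    ((hf m).differentiable one_ne_zero θstar).hasGradientAt.eventually_lt_of_inner_neg (hd m)
  obtain ⟨t, ht⟩ := (eventually_all.2 hdescent).exists
  exact hpareto ⟨θstar + t • d, fun m ↦ (ht m).le, fun heq ↦ (ht ⟨0, hn⟩).ne (congrFun heq _)⟩
end
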